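/- Let G be a connected graph with λ_3(G) = k and let x, y be adjacent vertices of G. Then deg_G(x) ≥ k + 1 or deg_G(y) ≥ k + 1. -/

import Mathlib

/-!
Pick a vertex `z ∉ {x, y}` (there is one when `λ₃(G) > 0`) and `k` edge-disjoint Steiner trees
for `{x, y, z}`. At most one of them uses the edge `xy`; every other tree has an edge at `x` not
going to `y` and an edge at `y` not going to `x`, while the tree using `xy` still has to leave
`{x, y}` to reach `z`, at `x` or at `y`. So one of `x`, `y` has such an edge in every tree, and by
edge-disjointness these `k` edges end in distinct neighbours, none of which is the other endpoint
of `xy`.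
-/

open Classical

variable {V W : Type*}

/-- An `S`-Steiner tree: a subgraph of `G` that is a tree and contains `S`. -/
def IsSteinerTree (G : SimpleGraph V) (S : Set V) (T : G.Subgraph) : Prop :=
  S ⊆ T.verts ∧ T.coe.IsTree

/-- There exist `n` pairwise edge-disjoint `S`-Steiner trees in `G`. -/
def HasSteinerPacking (G : SimpleGraph V) (S : Set V) (n : ℕ) : Prop :=
  ∃ T : Fin n → G.Subgraph, (∀ i, IsSteinerTree G S (T i)) ∧
    ∀ i j, i ≠ j → (T i).edgeSet ∩ (T j).edgeSet = ∅

/-- `λ(S)`: maximum number of pairwise edge-disjoint `S`-Steiner trees. -/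
noncomputable def steinerNum (G : SimpleGraph V) (S : Set V) : ℕ :=
  sSup {n | HasSteinerPacking G S n}

/-- Generalized `k`-edge-connectivity `λ_k(G)`. -/
noncomputable def genEdgeConn (G : SimpleGraph V) (k : ℕ) : ℕ :=
  sInf {m | ∃ S : Set V, S.Finite ∧ S.ncard = k ∧ steinerNum G S = m}

/-- Edge-connectivity: minimum number of edges whose deletion disconnects `G`. -/
noncomputable def edgeConn (G : SimpleGraph V) : ℕ :=
  sInf {m | ∃ F : Set (Sym2 V), F ⊆ G.edgeSet ∧ F.ncard = m ∧ ¬ (G.deleteEdges F).Connected}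

/-- Degree of a vertex as the cardinality of its neighbor set. -/
noncomputable def degOf (G : SimpleGraph V) (v : V) : ℕ :=
  (G.neighborSet v).ncard

/-- Minimum degree. -/
noncomputable def minDeg (G : SimpleGraph V) : ℕ :=
  sInf {d | ∃ v, degOf G v = d}

/-- The lexicographic product `G ∘ H`. -/
def lexProd (G : SimpleGraph V) (H : SimpleGraph W) : SimpleGraph (V × W) where
  Adj p q := G.Adj p.1 q.1 ∨ (p.1 = q.1 ∧ H.Adj p.2 q.2)
  symm := ⟨by
    rintro p q (h | ⟨h1, h2⟩)
    · exact Or.inl h.symm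
    · exact Or.inr ⟨h1.symm, h2.symm⟩⟩
  loopless := ⟨by
    rintro p (h | ⟨_, h⟩)
    · exact G.irrefl h
    · exact H.irrefl h⟩

open Function

namespace SimpleGraph.Subgraph

variable {G : SimpleGraph V} {H : G.Subgraph}

lemma Preconnected.exists_adj_mem_notMem (hH : H.Preconnected) {s : Set V} {u v : V}
    (hu : u ∈ H.verts) (hv : v ∈ H.verts) (hus : u ∈ s) (hvs : v ∉ s) :
    ∃ a ∈ s, ∃ b ∉ s, H.Adj a b := by
  obtain ⟨p⟩ := hH ⟨u, hu⟩ ⟨v, hv⟩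
  obtain ⟨d, -, hd₁, hd₂⟩ := p.exists_boundary_dart (Subtype.val ⁻¹' s) hus hvs
  exact ⟨_, hd₁, _, hd₂, d.adj⟩

lemma Preconnected.exists_adj (hH : H.Preconnected) {x y : V}
    (hx : x ∈ H.verts) (hy : y ∈ H.verts) (hxy : x ≠ y) : ∃ w, H.Adj x w := by
  obtain ⟨a, rfl, w, -, haw⟩ :=
    hH.exists_adj_mem_notMem (s := {x}) hx hy rfl (Set.mem_singleton_iff.not.mpr hxy.symm)
  exact ⟨w, haw⟩

lemma Preconnected.exists_adj_ne_of_not_adj (hH : H.Preconnected) {x y : V}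
    (hx : x ∈ H.verts) (hy : y ∈ H.verts) (hxy : x ≠ y) (hnadj : ¬H.Adj x y) :
    ∃ w ≠ y, H.Adj x w := by
  obtain ⟨w, hw⟩ := hH.exists_adj hx hy hxy
  exact ⟨w, fun hwy => hnadj (hwy ▸ hw), hw⟩

lemma Preconnected.exists_adj_ne_or_exists_adj_ne (hH : H.Preconnected) {x y z : V}
    (hx : x ∈ H.verts) (hz : z ∈ H.verts) (hzx : z ≠ x) (hzy : z ≠ y) :
    (∃ w ≠ y, H.Adj x w) ∨ ∃ w ≠ x, H.Adj y w := by
  obtain ⟨a, ha, w, hw, haw⟩ :=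
    hH.exists_adj_mem_notMem (s := {x, y}) hx hz (by simp) (by simp [hzx, hzy])
  simp only [Set.mem_insert_iff, Set.mem_singleton_iff, not_or] at ha hw
  obtain rfl | rfl := ha
  exacts [Or.inl ⟨w, hw.2, haw⟩, Or.inr ⟨w, hw.1, haw⟩]

variable {ι : Type*} {T : ι → G.Subgraph}

lemma injective_of_pairwise_disjoint_edgeSet (hT : Pairwise (Disjoint on fun i => (T i).edgeSet))
    {x : V} {f : ι → V} (hf : ∀ i, (T i).Adj x (f i)) : Injective f := by
  intro i j hij
  by_contra hne
  exact Set.disjoint_left.mp (hT hne) ((T i).mem_edgeSet.mpr (hf i))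
    ((T j).mem_edgeSet.mpr (hij ▸ hf j))

lemma subsingleton_setOf_adj (hT : Pairwise (Disjoint on fun i => (T i).edgeSet)) (x y : V) :
    {i | (T i).Adj x y}.Subsingleton := by
  intro i hi j hj
  by_contra hne
  exact Set.disjoint_left.mp (hT hne) ((T i).mem_edgeSet.mpr hi) ((T j).mem_edgeSet.mpr hj)

end SimpleGraph.Subgraph

open SimpleGraph

lemma forall_or_forall_of_or_of_subsingleton {ι : Type*} {p q : ι → Prop}
    (hpq : ∀ i, p i ∨ q i) (hs : {i | ¬(p i ∧ q i)}.Subsingleton) :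
    (∀ i, p i) ∨ ∀ i, q i := by
  by_contra! ⟨⟨i, hi⟩, ⟨j, hj⟩⟩
  obtain rfl : i = j := hs (fun h => hi h.1) (fun h => hj h.2)
  exact (hpq i).elim hi hj

lemma add_one_le_degOf [Finite V] {ι : Type*} [Finite ι] {G : SimpleGraph V}
    {T : ι → G.Subgraph} (hT : Pairwise (Disjoint on fun i => (T i).edgeSet)) {x y : V}
    (hxy : G.Adj x y) (h : ∀ i, ∃ w ≠ y, (T i).Adj x w) : Nat.card ι + 1 ≤ degOf G x := by
  choose f hfy hf using h
  have hsub : insert y (Set.range f) ⊆ G.neighborSet x := by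
    rintro v (rfl | ⟨i, rfl⟩)
    exacts [hxy, (hf i).adj_sub]
  calc Nat.card ι + 1 = (insert y (Set.range f)).ncard := by
        rw [Set.ncard_insert_of_notMem (by rintro ⟨i, hi⟩; exact hfy i hi),
          Set.ncard_range_of_injective (Subgraph.injective_of_pairwise_disjoint_edgeSet hT hf)]
    _ ≤ degOf G x := Set.ncard_le_ncard hsub

section SteinerPacking

variable {G : SimpleGraph V} {S : Set V}

lemma IsSteinerTree.preconnected {T : G.Subgraph} (hT : IsSteinerTree G S T) :
    T.Preconnected :=
  ⟨hT.2.connected.preconnected⟩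

lemma hasSteinerPacking_iff {n : ℕ} :
    HasSteinerPacking G S n ↔ ∃ T : Fin n → G.Subgraph,
      (∀ i, IsSteinerTree G S (T i)) ∧ Pairwise (Disjoint on fun i => (T i).edgeSet) := by
  simp only [HasSteinerPacking, Pairwise, Function.onFun, Set.disjoint_iff_inter_eq_empty]

lemma HasSteinerPacking.mono {m n : ℕ} (h : HasSteinerPacking G S m) (hnm : n ≤ m) :
    HasSteinerPacking G S n := by
  obtain ⟨T, hT, hdisj⟩ := h
  exact ⟨T ∘ Fin.castLE hnm, fun i => hT _,
    fun i j hij => hdisj _ _ ((Fin.castLE_injective hnm).ne hij)⟩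

lemma HasSteinerPacking.le_card [Finite V] {n : ℕ} (h : HasSteinerPacking G S n) {x y : V}
    (hx : x ∈ S) (hy : y ∈ S) (hxy : x ≠ y) : n ≤ Nat.card V := by
  obtain ⟨T, hT, hdisj⟩ := hasSteinerPacking_iff.mp h
  choose f hf using fun i =>
    (hT i).preconnected.exists_adj ((hT i).1 hx) ((hT i).1 hy) hxy
  simpa using Nat.card_le_card_of_injective f
    (Subgraph.injective_of_pairwise_disjoint_edgeSet hdisj hf)

lemma hasSteinerPacking_steinerNum [Finite V] {x y : V} (hx : x ∈ S) (hy : y ∈ S)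
    (hxy : x ≠ y) :
    HasSteinerPacking G S (steinerNum G S) :=
  Nat.sSup_mem ⟨0, (⟨Fin.elim0, fun i => i.elim0, fun i => i.elim0⟩ : HasSteinerPacking G S 0)⟩
    ⟨Nat.card V, fun _ hn => HasSteinerPacking.le_card hn hx hy hxy⟩

end SteinerPacking

lemma genEdgeConn_le_steinerNum {G : SimpleGraph V} {S : Set V} (hS : S.Finite) :
    genEdgeConn G S.ncard ≤ steinerNum G S :=
  Nat.sInf_le ⟨S, hS, rfl, rfl⟩

lemma exists_ne_ne_of_genEdgeConn_three_pos {G : SimpleGraph V} (h : 0 < genEdgeConn G 3)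
    (x y : V) : ∃ z, z ≠ x ∧ z ≠ y := by
  obtain ⟨_, S, hS, hS3, -⟩ := Nat.nonempty_of_pos_sInf h
  by_contra! hxy
  have : S.ncard ≤ ({x, y} : Set V).ncard :=
    Set.ncard_le_ncard (fun z _ => by simpa [or_iff_not_imp_left] using hxy z) (Set.toFinite _)
  have := Set.ncard_insert_le x {y}
  rw [Set.ncard_singleton] at this
  omega

theorem stmt3_general {V : Type*} [Fintype V] (G : SimpleGraph V)
    (k : ℕ) (hk : genEdgeConn G 3 = k) (x y : V) (hxy : G.Adj x y) :
    k + 1 ≤ degOf G x ∨ k + 1 ≤ degOf G y := by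
  obtain rfl | hk₀ := Nat.eq_zero_or_pos k
  · exact Or.inl ((Set.ncard_pos (Set.toFinite _)).mpr ⟨y, hxy⟩)
  obtain ⟨z, hzx, hzy⟩ := exists_ne_ne_of_genEdgeConn_three_pos (hk ▸ hk₀) x y
  have hS : ({x, y, z} : Set V).ncard = 3 :=
    Set.ncard_eq_three.mpr ⟨x, y, z, hxy.ne, hzx.symm, hzy.symm, rfl⟩
  have hkS : k ≤ steinerNum G {x, y, z} := hk ▸ hS ▸ genEdgeConn_le_steinerNum (Set.toFinite _)
  obtain ⟨T, hT, hdisj⟩ := hasSteinerPacking_iff.mp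
    ((hasSteinerPacking_steinerNum (by simp) (by simp) hxy.ne).mono hkS)
  have hmem : ∀ i, x ∈ (T i).verts ∧ y ∈ (T i).verts ∧ z ∈ (T i).verts := fun i =>
    ⟨(hT i).1 (by simp), (hT i).1 (by simp), (hT i).1 (by simp)⟩
  have hone : ∀ i, (∃ w ≠ y, (T i).Adj x w) ∨ ∃ w ≠ x, (T i).Adj y w := fun i =>
    (hT i).preconnected.exists_adj_ne_or_exists_adj_ne (hmem i).1 (hmem i).2.2 hzx hzy
  have hboth : {i | ¬((∃ w ≠ y, (T i).Adj x w) ∧ ∃ w ≠ x, (T i).Adj y w)}.Subsingleton := by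
    refine (Subgraph.subsingleton_setOf_adj hdisj x y).anti fun i hi => ?_
    by_contra hnadj
    exact hi ⟨(hT i).preconnected.exists_adj_ne_of_not_adj (hmem i).1 (hmem i).2.1 hxy.ne hnadj,
      (hT i).preconnected.exists_adj_ne_of_not_adj (hmem i).2.1 (hmem i).1 hxy.ne.symm
        fun h => hnadj h.symm⟩
  simpa using (forall_or_forall_of_or_of_subsingleton hone hboth).imp
    (add_one_le_degOf hdisj hxy) (add_one_le_degOf hdisj hxy.symm)

theorem stmt3 {V : Type*} [Fintype V] (G : SimpleGraph V) (hG : G.Connected)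
    (k : ℕ) (hk : genEdgeConn G 3 = k) (x y : V) (hxy : G.Adj x y) :
    k + 1 ≤ degOf G x ∨ k + 1 ≤ degOf G y :=
  stmt3_general G k hk x y hxy
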